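/- Let L : C ⇄ D : R be a Quillen equivalence of monoidal model categories such that L is strong monoidal and D carries the R-lifted model structure. If the pushout-product axiom holds in C, and cofibrations and acyclic cofibrations of D are generated by images under L of (acyclic) cofibrations of C, then for generating cofibrations L(i) and L(j) in D the pushout product L(i) □ L(j) is isomorphic to L(i □ j), hence is a cofibration, and is acyclic if i or j is a weak equivalence. -/

import Mathlib

open CategoryTheory Limits

universe v u v' u'

/-- A (Quillen) model structure on a category `C`. -/
structure ModelStructure (C : Type u) [Category.{v} C] : Type (max u v) where
  W : MorphismProperty C
  Cof : MorphismProperty C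
  Fib : MorphismProperty C
  two_of_three : ∀ {X Y Z : C} (f : X ⟶ Y) (g : Y ⟶ Z),
      (W f → W g → W (f ≫ g)) ∧ (W f → W (f ≫ g) → W g) ∧ (W g → W (f ≫ g) → W f)
  W_retract : ∀ {A B X Y : C} (f : A ⟶ B) (g : X ⟶ Y) (i₁ : A ⟶ X) (r₁ : X ⟶ A)
      (i₂ : B ⟶ Y) (r₂ : Y ⟶ B), i₁ ≫ r₁ = 𝟙 A → i₂ ≫ r₂ = 𝟙 B →
      i₁ ≫ g = f ≫ i₂ → g ≫ r₂ = r₁ ≫ f → W g → W f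
  Cof_retract : ∀ {A B X Y : C} (f : A ⟶ B) (g : X ⟶ Y) (i₁ : A ⟶ X) (r₁ : X ⟶ A)
      (i₂ : B ⟶ Y) (r₂ : Y ⟶ B), i₁ ≫ r₁ = 𝟙 A → i₂ ≫ r₂ = 𝟙 B →
      i₁ ≫ g = f ≫ i₂ → g ≫ r₂ = r₁ ≫ f → Cof g → Cof f
  Fib_retract : ∀ {A B X Y : C} (f : A ⟶ B) (g : X ⟶ Y) (i₁ : A ⟶ X) (r₁ : X ⟶ A)
      (i₂ : B ⟶ Y) (r₂ : Y ⟶ B), i₁ ≫ r₁ = 𝟙 A → i₂ ≫ r₂ = 𝟙 B →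
      i₁ ≫ g = f ≫ i₂ → g ≫ r₂ = r₁ ≫ f → Fib g → Fib f
  Cof_llp : ∀ {A B : C} (i : A ⟶ B),
      Cof i ↔ ∀ {X Y : C} (p : X ⟶ Y), Fib p → W p → HasLiftingProperty i p
  Fib_rlp : ∀ {X Y : C} (p : X ⟶ Y),
      Fib p ↔ ∀ {A B : C} (i : A ⟶ B), Cof i → W i → HasLiftingProperty i p
  fact₁ : ∀ {X Y : C} (f : X ⟶ Y), ∃ (Z : C) (i : X ⟶ Z) (p : Z ⟶ Y),
      Cof i ∧ Fib p ∧ W p ∧ i ≫ p = f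
  fact₂ : ∀ {X Y : C} (f : X ⟶ Y), ∃ (Z : C) (i : X ⟶ Z) (p : Z ⟶ Y),
      Cof i ∧ W i ∧ Fib p ∧ i ≫ p = f

/-- The pushout product `i □ j : (B × X) ⊔_{A × X} (A × Y) ⟶ B × Y` of `i : A ⟶ B` and
`j : X ⟶ Y` (with respect to the cartesian monoidal structure). -/
noncomputable def pushoutProduct {C : Type u} [Category.{v} C] [HasBinaryProducts C]
    [HasPushouts C] {A B X Y : C} (i : A ⟶ B) (j : X ⟶ Y) :
    pushout (prod.map i (𝟙 X)) (prod.map (𝟙 A) j) ⟶ B ⨯ Y :=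
  pushout.desc (prod.map (𝟙 B) j) (prod.map i (𝟙 Y))
    (by rw [prod.map_map, prod.map_map]; simp)

/-- The model structure `MD` is the `R`-lifted model structure. -/
def IsRLifted {C : Type u} [Category.{v} C] {D : Type u'} [Category.{v'} D]
    (MC : ModelStructure C) (MD : ModelStructure D) (R : D ⥤ C) : Prop :=
  (∀ {X Y : D} (f : X ⟶ Y), MD.W f ↔ MC.W (R.map f)) ∧
  (∀ {X Y : D} (f : X ⟶ Y), MD.Fib f ↔ MC.Fib (R.map f))

/-!
A functor preserving binary products and pushouts carries the pushout square defining `i □ j`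
to the pushout square defining `L i □ L j`, up to the comparison isomorphisms
`L (P × Q) ≅ L P × L Q`; hence `L (i □ j)` and `L i □ L j` are isomorphic arrows. Since the
classes of cofibrations and weak equivalences of a model structure are closed under retracts,
they are closed under isomorphism of arrows, so `L i □ L j` inherits the properties of
`L (i □ j)` given by the pushout-product axiom in `C` and left Quillen-ness of `L`.
-/

namespace ModelStructure

variable {C : Type u} [Category.{v} C] (M : ModelStructure C)

instance : M.Cof.IsStableUnderRetracts where
  of_retract h hg := M.Cof_retract _ _ h.i.left h.r.left h.i.right h.r.right
    h.retract_left h.retract_right h.i_w h.r_w.symm hg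

instance : M.W.IsStableUnderRetracts where
  of_retract h hg := M.W_retract _ _ h.i.left h.r.left h.i.right h.r.right
    h.retract_left h.retract_right h.i_w h.r_w.symm hg

end ModelStructure

@[simp]
lemma inl_pushoutProduct {C : Type u} [Category.{v} C] [HasBinaryProducts C] [HasPushouts C]
    {A B X Y : C} (i : A ⟶ B) (j : X ⟶ Y) :
    pushout.inl _ _ ≫ pushoutProduct i j = prod.map (𝟙 B) j :=
  pushout.inl_desc _ _ _

@[simp]
lemma inr_pushoutProduct {C : Type u} [Category.{v} C] [HasBinaryProducts C] [HasPushouts C]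
    {A B X Y : C} (i : A ⟶ B) (j : X ⟶ Y) :
    pushout.inr _ _ ≫ pushoutProduct i j = prod.map i (𝟙 Y) :=
  pushout.inr_desc _ _ _

section PushoutProduct

variable {C : Type u} [Category.{v} C] {D : Type u'} [Category.{v'} D]
  [HasBinaryProducts C] [HasPushouts C]
  (L : C ⥤ D) [PreservesLimitsOfShape (Discrete WalkingPair) L]
  [PreservesColimitsOfShape WalkingSpan L]
  {A B X Y : C} (i : A ⟶ B) (j : X ⟶ Y)

lemma isPushout_map_pushoutProduct_source :
    IsPushout (prod.map (L.map i) (𝟙 (L.obj X))) (prod.map (𝟙 (L.obj A)) (L.map j))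
      ((PreservesLimitPair.iso L B X).inv ≫
        L.map (pushout.inl (prod.map i (𝟙 X)) (prod.map (𝟙 A) j)))
      ((PreservesLimitPair.iso L A Y).inv ≫
        L.map (pushout.inr (prod.map i (𝟙 X)) (prod.map (𝟙 A) j))) :=
  ((IsPushout.of_hasPushout (prod.map i (𝟙 X)) (prod.map (𝟙 A) j)).map L).of_iso
    (PreservesLimitPair.iso L A X) (PreservesLimitPair.iso L B X) (PreservesLimitPair.iso L A Y)
    (Iso.refl _)
    (by simpa using prodComparison_natural L i (𝟙 X))
    (by simpa using prodComparison_natural L (𝟙 A) j)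
    (by rw [Iso.refl_hom, Category.comp_id, Iso.hom_inv_id_assoc])
    (by rw [Iso.refl_hom, Category.comp_id, Iso.hom_inv_id_assoc])

noncomputable def mapPushoutProductIso [HasBinaryProducts D] [HasPushouts D] :
    Arrow.mk (L.map (pushoutProduct i j)) ≅ Arrow.mk (pushoutProduct (L.map i) (L.map j)) :=
  Arrow.isoMk (isPushout_map_pushoutProduct_source L i j).isoPushout
    (PreservesLimitPair.iso L B Y) <| by
    apply (isPushout_map_pushoutProduct_source L i j).hom_ext <;>
    · simp only [Arrow.mk_hom, Category.assoc, IsPushout.inl_isoPushout_hom_assoc,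
        IsPushout.inr_isoPushout_hom_assoc, inl_pushoutProduct, inr_pushoutProduct,
        ← L.map_comp_assoc, PreservesLimitPair.iso_hom, prodComparison_natural, L.map_id]
      rw [← PreservesLimitPair.iso_hom, Iso.inv_hom_id_assoc]

end PushoutProduct

theorem stmt9_general {C : Type u} [Category.{v} C] {D : Type u'} [Category.{v'} D]
    [HasBinaryProducts C] [HasPushouts C] [HasBinaryProducts D] [HasPushouts D]
    (MC : ModelStructure C) (MD : ModelStructure D)
    (L : C ⥤ D)
    (hprod : PreservesLimitsOfShape (Discrete WalkingPair) L)
    (hpush : PreservesColimitsOfShape WalkingSpan L)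
    (hLcof : ∀ {X Y : C} (f : X ⟶ Y), MC.Cof f → MD.Cof (L.map f))
    (hLacof : ∀ {X Y : C} (f : X ⟶ Y), MC.Cof f → MC.W f → MD.Cof (L.map f) ∧ MD.W (L.map f))
    (hppC : ∀ {A B X Y : C} (i : A ⟶ B) (j : X ⟶ Y), MC.Cof i → MC.Cof j →
      MC.Cof (pushoutProduct i j) ∧
        ((MC.W i ∨ MC.W j) → MC.W (pushoutProduct i j)))
    {A B X Y : C} (i : A ⟶ B) (j : X ⟶ Y) (hi : MC.Cof i) (hj : MC.Cof j) :
    Nonempty (Arrow.mk (L.map (pushoutProduct i j)) ≅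
      Arrow.mk (pushoutProduct (L.map i) (L.map j))) ∧
    MD.Cof (pushoutProduct (L.map i) (L.map j)) ∧
    ((MC.W i ∨ MC.W j) → MD.W (pushoutProduct (L.map i) (L.map j))) := by
  let e := mapPushoutProductIso L i j
  obtain ⟨hcof, hweq⟩ := hppC i j hi hj
  exact ⟨⟨e⟩, (MD.Cof.arrow_mk_iso_iff e).1 (hLcof _ hcof),
    fun hW => (MD.W.arrow_mk_iso_iff e).1 (hLacof _ hcof (hweq hW)).2⟩

/-- Let `L ⊣ R` be a Quillen equivalence of monoidal model categories
(cartesian monoidal structures) where `L` is strong monoidal (it preserves binary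
products and pushouts) and `D` carries the `R`-lifted model structure.  Assume the
pushout-product axiom holds in `C` and that `L` is a left Quillen functor (cofibrations
and acyclic cofibrations of `D` being generated by the images under `L` of the (acyclic)
cofibrations of `C`).  Then for (generating) cofibrations `i`, `j` of `C` the pushout
product `L i □ L j` is isomorphic to `L (i □ j)` — hence it is a cofibration, and it is
acyclic as soon as `i` or `j` is a weak equivalence. -/
theorem stmt9 {C : Type u} [Category.{v} C] {D : Type u'} [Category.{v'} D]
    [HasBinaryProducts C] [HasPushouts C] [HasBinaryProducts D] [HasPushouts D]
    (MC : ModelStructure C) (MD : ModelStructure D)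
    (L : C ⥤ D) (R : D ⥤ C) (adj : L ⊣ R)
    (hlift : IsRLifted MC MD R)
    (hprod : PreservesLimitsOfShape (Discrete WalkingPair) L)
    (hpush : PreservesColimitsOfShape WalkingSpan L)
    (hLcof : ∀ {X Y : C} (f : X ⟶ Y), MC.Cof f → MD.Cof (L.map f))
    (hLacof : ∀ {X Y : C} (f : X ⟶ Y), MC.Cof f → MC.W f → MD.Cof (L.map f) ∧ MD.W (L.map f))
    (hppC : ∀ {A B X Y : C} (i : A ⟶ B) (j : X ⟶ Y), MC.Cof i → MC.Cof j →
      MC.Cof (pushoutProduct i j) ∧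
        ((MC.W i ∨ MC.W j) → MC.W (pushoutProduct i j)))
    {A B X Y : C} (i : A ⟶ B) (j : X ⟶ Y) (hi : MC.Cof i) (hj : MC.Cof j) :
    Nonempty (Arrow.mk (L.map (pushoutProduct i j)) ≅
      Arrow.mk (pushoutProduct (L.map i) (L.map j))) ∧
    MD.Cof (pushoutProduct (L.map i) (L.map j)) ∧
    ((MC.W i ∨ MC.W j) → MD.W (pushoutProduct (L.map i) (L.map j))) :=
  stmt9_general MC MD L hprod hpush hLcof hLacof hppC i j hi hj
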